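/- Let φ be a unit vector in ℂ^{d_B}⊗ℂ^{d_C} (finite positive dimensions), let P = |φ⟩⟨φ| be the orthogonal projection onto φ, and let ρ_B be the reduced density matrix of P on the first factor, (ρ_B)_{b,b'} = Σ_c φ(b,c)·conj(φ(b',c)). Then Tr[(P^Γ)³] = Tr(ρ_B³). -/
import Mathlib


open scoped BigOperators
open Matrix

noncomputable section

/-- Partial transpose over the second tensor factor. -/
def ptranspose {d d' : ℕ} (M : Matrix (Fin d × Fin d') (Fin d × Fin d') ℂ) :
    Matrix (Fin d × Fin d') (Fin d × Fin d') ℂ :=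
  fun p q => M (p.1, q.2) (q.1, p.2)

/-- Orthogonal projection onto a vector: `(|φ⟩⟨φ|)_{i j} = φ i * conj (φ j)`. -/
def proj {n : Type*} [Fintype n] (φ : n → ℂ) : Matrix n n ℂ :=
  Matrix.vecMulVec φ (star φ)

/-- Reduced density matrix of `|φ⟩⟨φ|` on the first factor. -/
def rhoB (dB dC : ℕ) (φ : Fin dB × Fin dC → ℂ) : Matrix (Fin dB) (Fin dB) ℂ :=
  fun b b' => ∑ c : Fin dC, φ (b, c) * (starRingEnd ℂ) (φ (b', c))

lemma trace_pow_three {n : Type*} [Fintype n] [DecidableEq n] (M : Matrix n n ℂ) :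
    (M ^ 3).trace = ∑ x : n × n × n, M x.1 x.2.1 * (M x.2.1 x.2.2 * M x.2.2 x.1) := by
  rw [pow_succ, pow_succ, pow_one]
  simp only [Matrix.trace, Matrix.diag, Matrix.mul_apply, Finset.sum_mul,
    Fintype.sum_prod_type]
  congr 1; ext i
  rw [Finset.sum_comm]
  congr 1; ext j
  congr 1; ext k
  ring

theorem trace_ptranspose_cube_pure
    (dB dC : ℕ) (hdB : 0 < dB) (hdC : 0 < dC)
    (φ : Fin dB × Fin dC → ℂ)
    (hφ : ∑ p : Fin dB × Fin dC, ‖φ p‖ ^ 2 = 1) :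
    ((ptranspose (proj φ)) ^ 3).trace = ((rhoB dB dC φ) ^ 3).trace := by
  rw [trace_pow_three, trace_pow_three]
  have hR : ∀ y : Fin dB × Fin dB × Fin dB,
      rhoB dB dC φ y.1 y.2.1 * (rhoB dB dC φ y.2.1 y.2.2 * rhoB dB dC φ y.2.2 y.1)
      = ∑ z : Fin dC × Fin dC × Fin dC,
          φ (y.1, z.1) * (starRingEnd ℂ) (φ (y.2.1, z.1)) *
          (φ (y.2.1, z.2.1) * (starRingEnd ℂ) (φ (y.2.2, z.2.1)) *
           (φ (y.2.2, z.2.2) * (starRingEnd ℂ) (φ (y.1, z.2.2)))) := by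
    intro y
    simp only [rhoB, Fintype.sum_prod_type]
    rw [Finset.sum_mul_sum, Finset.sum_mul]
    simp only [Finset.mul_sum]
  have key : (∑ x : (Fin dB × Fin dC) × (Fin dB × Fin dC) × (Fin dB × Fin dC),
        ptranspose (proj φ) x.1 x.2.1 *
          (ptranspose (proj φ) x.2.1 x.2.2 * ptranspose (proj φ) x.2.2 x.1))
      = ∑ w : (Fin dB × Fin dB × Fin dB) × (Fin dC × Fin dC × Fin dC),
          φ (w.1.1, w.2.1) * (starRingEnd ℂ) (φ (w.1.2.1, w.2.1)) *
          (φ (w.1.2.1, w.2.2.1) * (starRingEnd ℂ) (φ (w.1.2.2, w.2.2.1)) *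
           (φ (w.1.2.2, w.2.2.2) * (starRingEnd ℂ) (φ (w.1.1, w.2.2.2)))) := by
    apply Fintype.sum_equiv
      (show ((Fin dB × Fin dC) × (Fin dB × Fin dC) × (Fin dB × Fin dC)) ≃
          ((Fin dB × Fin dB × Fin dB) × (Fin dC × Fin dC × Fin dC)) from
        ⟨fun x => ((x.1.1, x.2.2.1, x.2.1.1), (x.2.1.2, x.1.2, x.2.2.2)),
         fun y => ((y.1.1, y.2.2.1), (y.1.2.2, y.2.1), (y.1.2.1, y.2.2.2)),
         fun _ => rfl, fun _ => rfl⟩)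
    intro x
    simp only [ptranspose, proj, Matrix.vecMulVec_apply, Pi.star_apply, RCLike.star_def,
      Equiv.coe_fn_mk]
    ring
  rw [key, Fintype.sum_prod_type]
  exact Finset.sum_congr rfl fun y _ => (hR y).symm

end
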